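/- Suppose f and h both satisfy (G1)–(G3), and fix H with ‖H‖_{2,col} ≤ B. Let Θ = (θ_{l,j}, w_{l,j}) and Θ̃ = (θ̃_{l,j}, w̃_{l,j}) be two parameter configurations of depth L and width M with √(‖θ_{l,j}‖²+‖w_{l,j}‖²) ≤ r and √(‖θ̃_{l,j}‖²+‖w̃_{l,j}‖²) ≤ r for all l, j. Then there is a constant C, depending only on N, D, r, B and the constants in (G1)–(G3), such that at every grid point t ∈ {0, 1/L, …, 1}: ‖T̂_Θ(H,t) − T̂_{Θ̃}(H,t)‖_F ≤ (C/(ML))·∑_{l=0}^{L−1}∑_{j=1}^{M} √(‖θ_{l,j}−θ̃_{l,j}‖² + ‖w_{l,j}−w̃_{l,j}‖²). -/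

import Mathlib

open MeasureTheory Set

noncomputable section

/-- `D × (N+1)` real matrices, with the Frobenius (Euclidean) norm. -/
abbrev Mat (D N : ℕ) : Type := EuclideanSpace ℝ (Fin D × Fin (N + 1))

/-- Parameter space `ℝ^p` with the Euclidean norm. -/
abbrev Par (p : ℕ) : Type := EuclideanSpace ℝ (Fin p)

/-- The `j`-th column of a matrix, as a Euclidean vector. -/
noncomputable def matCol {D N : ℕ} (Z : Mat D N) (j : Fin (N + 1)) :
    EuclideanSpace ℝ (Fin D) :=
  (WithLp.equiv 2 (Fin D → ℝ)).symm fun i => Z (i, j)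

/-- Maximum ℓ²-norm of a column: `‖Z‖_{2,col}`. -/
noncomputable def colNorm {D N : ℕ} (Z : Mat D N) : ℝ :=
  ⨆ j : Fin (N + 1), ‖matCol Z j‖

/-- The discrete Transformer: `T̂(t_{l+1})` is obtained from `T̂(t_l)` by one self-attention
half-step with encoder `f` followed by one feed-forward half-step with encoder `h`,
with step size `Δt/2 = 1/(2L)` and `M` heads. -/
noncomputable def Tdis {D N q : ℕ} (f h : Mat D N → Par q → Mat D N) (L M : ℕ)
    (θ w : ℕ → Fin M → Par q) (H : Mat D N) : ℕ → Mat D N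
  | 0 => H
  | l + 1 =>
    let T := Tdis f h L M θ w H l
    let T' := T + (2 * (L : ℝ) * (M : ℝ))⁻¹ • ∑ j : Fin M, f T (θ l j)
    T' + (2 * (L : ℝ) * (M : ℝ))⁻¹ • ∑ j : Fin M, h T' (w l j)

/-- The discrete Transformer at the half grid point `t_l + Δt/2`. -/
noncomputable def TdisHalf {D N q : ℕ} (f h : Mat D N → Par q → Mat D N) (L M : ℕ)
    (θ w : ℕ → Fin M → Par q) (H : Mat D N) (l : ℕ) : Mat D N :=
  Tdis f h L M θ w H l +
    (2 * (L : ℝ) * (M : ℝ))⁻¹ • ∑ j : Fin M, f (Tdis f h L M θ w H l) (θ l j)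

/-!
By (G1) both encoders grow at most linearly in the state, with some constant `κ`, so each layer
multiplies the Frobenius norm by at most `(1 + κ / (2L))²` and every state of either network
stays in the ball of radius `R = exp κ * √(N+1) * B`. On that ball (G2) and (G3), through the mean
value inequality, make the encoders jointly Lipschitz, with constants `α` in the state and `Λ` in
the parameter. Hence the error `e l` between the two networks obeys
`e (l+1) ≤ (1 + α / (2L))² * e l + c l`, with `c l` of order `Λ / (LM)` times the parameter
distance of layer `l`, and a discrete Grönwall argument bounds `e l` by `exp (2α) * ∑ c l`.
-/
section Columns

variable {D N : ℕ}

theorem matCol_smul (c : ℝ) (Z : Mat D N) (j : Fin (N + 1)) :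
    matCol (c • Z) j = c • matCol Z j := rfl

def matColCLM (D N : ℕ) (j : Fin (N + 1)) : Mat D N →L[ℝ] EuclideanSpace ℝ (Fin D) :=
  LinearMap.toContinuousLinearMap
    { toFun := fun Z => matCol Z j
      map_add' := fun _ _ => rfl
      map_smul' := fun c Z => matCol_smul c Z j }

theorem norm_sq_eq_sum_norm_matCol_sq (Z : Mat D N) :
    ‖Z‖ ^ 2 = ∑ j, ‖matCol Z j‖ ^ 2 := by
  simp only [EuclideanSpace.norm_sq_eq, Fintype.sum_prod_type_right]
  rfl

theorem norm_matCol_le_norm (Z : Mat D N) (j : Fin (N + 1)) : ‖matCol Z j‖ ≤ ‖Z‖ := by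
  refine (pow_le_pow_iff_left₀ (norm_nonneg _) (norm_nonneg _) two_ne_zero).1 ?_
  rw [norm_sq_eq_sum_norm_matCol_sq]
  exact Finset.single_le_sum (f := fun j => ‖matCol Z j‖ ^ 2) (fun _ _ => by positivity)
    (Finset.mem_univ j)

theorem norm_le_sqrt_mul_of_norm_matCol_le {Z : Mat D N} {c : ℝ} (hc : 0 ≤ c)
    (h : ∀ j, ‖matCol Z j‖ ≤ c) : ‖Z‖ ≤ √(N + 1) * c := by
  refine (pow_le_pow_iff_left₀ (norm_nonneg _) (by positivity) two_ne_zero).1 ?_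
  rw [norm_sq_eq_sum_norm_matCol_sq, mul_pow, Real.sq_sqrt (by positivity)]
  calc ∑ j, ‖matCol Z j‖ ^ 2 ≤ ∑ _j : Fin (N + 1), c ^ 2 := by gcongr with j; exact h j
    _ = (N + 1) * c ^ 2 := by simp

theorem colNorm_nonneg (Z : Mat D N) : 0 ≤ colNorm Z :=
  Real.iSup_nonneg fun _ => norm_nonneg _

theorem norm_matCol_le_colNorm (Z : Mat D N) (j : Fin (N + 1)) : ‖matCol Z j‖ ≤ colNorm Z :=
  le_ciSup (f := fun j => ‖matCol Z j‖) (Finite.bddAbove (Set.finite_range _)) j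

theorem colNorm_le_norm (Z : Mat D N) : colNorm Z ≤ ‖Z‖ :=
  ciSup_le (norm_matCol_le_norm Z)

theorem norm_le_sqrt_mul_colNorm (Z : Mat D N) : ‖Z‖ ≤ √(N + 1) * colNorm Z :=
  norm_le_sqrt_mul_of_norm_matCol_le (colNorm_nonneg Z) (norm_matCol_le_colNorm Z)

end Columns

section EulerStep

variable {E F : Type*} [NormedAddCommGroup E] [NormedSpace ℝ E] [SeminormedAddCommGroup F]
  {M : ℕ}

def eulerStep (g : E → F → E) (δ : ℝ) (p : Fin M → F) (x : E) : E :=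
  x + δ • ∑ j, g x (p j)

def LinearGrowthOn (g : E → F → E) (r κ : ℝ) : Prop :=
  ∀ x p, ‖p‖ ≤ r → ‖g x p‖ ≤ κ * ‖x‖

def LipschitzOnBalls (g : E → F → E) (R r α Λ : ℝ) : Prop :=
  ∀ x y p p', ‖x‖ ≤ R → ‖y‖ ≤ R → ‖p‖ ≤ r → ‖p'‖ ≤ r →
    ‖g x p - g y p'‖ ≤ α * ‖x - y‖ + Λ * ‖p - p'‖

variable {g : E → F → E} {δ : ℝ} {p p' : Fin M → F} {x y : E} {r : ℝ}

theorem LinearGrowthOn.norm_eulerStep_le {κ : ℝ} (hg : LinearGrowthOn g r κ) (hδ : 0 ≤ δ)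
    (hp : ∀ j, ‖p j‖ ≤ r) : ‖eulerStep g δ p x‖ ≤ (1 + δ * M * κ) * ‖x‖ :=
  calc ‖eulerStep g δ p x‖ ≤ ‖x‖ + δ * ∑ j, ‖g x (p j)‖ := by
        refine (norm_add_le _ _).trans ?_
        rw [norm_smul, Real.norm_of_nonneg hδ]
        gcongr
        exact norm_sum_le _ _
    _ ≤ ‖x‖ + δ * ∑ _j : Fin M, κ * ‖x‖ := by gcongr with j; exact hg x (p j) (hp j)
    _ = (1 + δ * M * κ) * ‖x‖ := by
        rw [Finset.sum_const, Finset.card_univ, Fintype.card_fin, nsmul_eq_mul]; ring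

theorem LipschitzOnBalls.norm_eulerStep_sub_le {R α Λ : ℝ} (hg : LipschitzOnBalls g R r α Λ)
    (hδ : 0 ≤ δ) (hx : ‖x‖ ≤ R) (hy : ‖y‖ ≤ R) (hp : ∀ j, ‖p j‖ ≤ r) (hp' : ∀ j, ‖p' j‖ ≤ r) :
    ‖eulerStep g δ p x - eulerStep g δ p' y‖ ≤
      (1 + δ * M * α) * ‖x - y‖ + δ * Λ * ∑ j, ‖p j - p' j‖ :=
  calc ‖eulerStep g δ p x - eulerStep g δ p' y‖
        = ‖(x - y) + δ • ∑ j, (g x (p j) - g y (p' j))‖ := by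
          rw [eulerStep, eulerStep, Finset.sum_sub_distrib, smul_sub]; abel_nf
    _ ≤ ‖x - y‖ + δ * ∑ j, ‖g x (p j) - g y (p' j)‖ := by
        refine (norm_add_le _ _).trans ?_
        rw [norm_smul, Real.norm_of_nonneg hδ]
        gcongr
        exact norm_sum_le _ _
    _ ≤ ‖x - y‖ + δ * ∑ j, (α * ‖x - y‖ + Λ * ‖p j - p' j‖) := by
        gcongr with j; exact hg x y (p j) (p' j) hx hy (hp j) (hp' j)
    _ = (1 + δ * M * α) * ‖x - y‖ + δ * Λ * ∑ j, ‖p j - p' j‖ := by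
        simp only [Finset.sum_add_distrib, ← Finset.mul_sum, Finset.sum_const, Finset.card_univ,
          Fintype.card_fin, nsmul_eq_mul]
        ring

end EulerStep

theorem norm_sub_le_of_norm_fderiv_le_of_monotone {E F : Type*} [NormedAddCommGroup E]
    [NormedSpace ℝ E] [NormedAddCommGroup F] [NormedSpace ℝ F] {G : E → F}
    (hG : Differentiable ℝ G) {φ : ℝ → ℝ} (hφ : Monotone φ)
    (hG' : ∀ x, ‖fderiv ℝ G x‖ ≤ φ ‖x‖) {ρ : ℝ} {x y : E} (hx : ‖x‖ ≤ ρ) (hy : ‖y‖ ≤ ρ) :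
    ‖G x - G y‖ ≤ φ ρ * ‖x - y‖ :=
  (convex_closedBall (0 : E) ρ).norm_image_sub_le_of_norm_fderiv_le
    (fun z _ => hG z) (fun z hz => (hG' z).trans (hφ (mem_closedBall_zero_iff.1 hz)))
    (mem_closedBall_zero_iff.2 hy) (mem_closedBall_zero_iff.2 hx)

/-- The conditions (G1)–(G3) on an encoder `g`, together with its joint differentiability. -/
structure IsRegularEncoder {D N q : ℕ} (g : Mat D N → Par q → Mat D N) (K : ℝ)
    (φP φT : ℝ → ℝ) : Prop where
  differentiable : Differentiable ℝ fun z : Mat D N × Par q => g z.1 z.2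
  colNorm_le : ∀ T θ, colNorm (g T θ) ≤ K * colNorm T * (1 + ‖θ‖ + ‖θ‖ ^ 2)
  norm_fderiv_param_le : ∀ T θ i,
    ‖fderiv ℝ (fun θ' => matCol (g T θ') i) θ‖ ≤ φP (colNorm T) * (1 + ‖θ‖)
  norm_fderiv_state_le : ∀ T θ,
    ‖fderiv ℝ (fun T' => g T' θ) T‖ ≤ φT ‖T‖ * (1 + ‖θ‖ + ‖θ‖ ^ 2)

namespace IsRegularEncoder

variable {D N q : ℕ} {g : Mat D N → Par q → Mat D N} {K : ℝ} {φP φT : ℝ → ℝ}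

theorem phiP_nonneg (hg : IsRegularEncoder g K φP φT) (T : Mat D N) : 0 ≤ φP (colNorm T) := by
  simpa using (norm_nonneg _).trans (hg.norm_fderiv_param_le T 0 0)

theorem phiT_nonneg (hg : IsRegularEncoder g K φP φT) (T : Mat D N) : 0 ≤ φT ‖T‖ := by
  simpa using (norm_nonneg _).trans (hg.norm_fderiv_state_le T 0)

theorem linearGrowthOn (hg : IsRegularEncoder g K φP φT) (hK : 0 ≤ K) {r : ℝ} :
    LinearGrowthOn g r (√(N + 1) * K * (1 + r + r ^ 2)) := by
  intro T θ hθ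
  have hcol : ∀ j, ‖matCol (g T θ) j‖ ≤ K * (1 + r + r ^ 2) * ‖T‖ := fun j =>
    calc ‖matCol (g T θ) j‖ ≤ K * colNorm T * (1 + ‖θ‖ + ‖θ‖ ^ 2) :=
          (norm_matCol_le_colNorm _ j).trans (hg.colNorm_le T θ)
      _ ≤ K * ‖T‖ * (1 + r + r ^ 2) := by
          have := colNorm_nonneg T
          gcongr
          exact colNorm_le_norm T
      _ = K * (1 + r + r ^ 2) * ‖T‖ := by ring
  have hr : 0 ≤ r := (norm_nonneg θ).trans hθ
  simpa only [mul_assoc] using norm_le_sqrt_mul_of_norm_matCol_le (by positivity) hcol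

theorem norm_sub_param_le (hg : IsRegularEncoder g K φP φT) {r : ℝ} (T : Mat D N)
    {θ θ' : Par q} (hθ : ‖θ‖ ≤ r) (hθ' : ‖θ'‖ ≤ r) :
    ‖g T θ - g T θ'‖ ≤ √(N + 1) * φP (colNorm T) * (1 + r) * ‖θ - θ'‖ := by
  have hgT : Differentiable ℝ fun θ'' => g T θ'' :=
    hg.differentiable.comp ((differentiable_const T).prodMk differentiable_id)
  have hcol : ∀ i, ‖matCol (g T θ - g T θ') i‖ ≤ φP (colNorm T) * (1 + r) * ‖θ - θ'‖ :=
    fun i => norm_sub_le_of_norm_fderiv_le_of_monotone ((matColCLM D N i).differentiable.comp hgT)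
      (fun _ _ hst => mul_le_mul_of_nonneg_left (by linarith) (hg.phiP_nonneg T))
      (hg.norm_fderiv_param_le T · i) hθ hθ'
  have h0 : 0 ≤ φP (colNorm T) * (1 + r) * ‖θ - θ'‖ := by
    have := hg.phiP_nonneg T
    have : 0 ≤ 1 + r := by linarith [norm_nonneg θ]
    positivity
  simpa only [mul_assoc] using norm_le_sqrt_mul_of_norm_matCol_le h0 hcol

theorem norm_sub_state_le (hg : IsRegularEncoder g K φP φT) (hφT : Monotone φT) {ρ : ℝ}
    {T S : Mat D N} (hT : ‖T‖ ≤ ρ) (hS : ‖S‖ ≤ ρ) (θ : Par q) :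
    ‖g T θ - g S θ‖ ≤ φT ρ * (1 + ‖θ‖ + ‖θ‖ ^ 2) * ‖T - S‖ :=
  norm_sub_le_of_norm_fderiv_le_of_monotone
    (hg.differentiable.comp (differentiable_id.prodMk (differentiable_const θ)))
    (hφT.mul_const (by positivity)) (hg.norm_fderiv_state_le · θ) hT hS

theorem lipschitzOnBalls (hg : IsRegularEncoder g K φP φT) (hφP : Monotone φP)
    (hφT : Monotone φT) {R r : ℝ} :
    LipschitzOnBalls g R r (φT R * (1 + r + r ^ 2)) (√(N + 1) * φP R * (1 + r)) := by
  intro T S θ θ' hT hS hθ hθ'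
  have hr : 0 ≤ r := (norm_nonneg θ).trans hθ
  have hφT0 : 0 ≤ φT R := (hg.phiT_nonneg S).trans (hφT hS)
  have hφP : φP (colNorm S) ≤ φP R := hφP ((colNorm_le_norm S).trans hS)
  calc ‖g T θ - g S θ'‖ ≤ ‖g T θ - g S θ‖ + ‖g S θ - g S θ'‖ :=
        norm_sub_le_norm_sub_add_norm_sub _ _ _
    _ ≤ φT R * (1 + ‖θ‖ + ‖θ‖ ^ 2) * ‖T - S‖ + √(N + 1) * φP (colNorm S) * (1 + r) * ‖θ - θ'‖ :=
        add_le_add (hg.norm_sub_state_le hφT hT hS θ) (hg.norm_sub_param_le S hθ hθ')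
    _ ≤ φT R * (1 + r + r ^ 2) * ‖T - S‖ + √(N + 1) * φP R * (1 + r) * ‖θ - θ'‖ := by
        gcongr

end IsRegularEncoder

theorem le_pow_mul_add_sum_of_le_mul_add {a c : ℕ → ℝ} {β : ℝ} {m : ℕ} (hβ : 1 ≤ β)
    (hc : ∀ k < m, 0 ≤ c k) (h : ∀ k < m, a (k + 1) ≤ β * a k + c k) :
    ∀ n ≤ m, a n ≤ β ^ n * (a 0 + ∑ k ∈ Finset.range n, c k)
  | 0, _ => by simp
  | n + 1, hn => by
    have hnm : n < m := hn
    have hβ0 : 0 ≤ β := zero_le_one.trans hβ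
    calc a (n + 1) ≤ β * a n + c n := h n hnm
      _ ≤ β * (β ^ n * (a 0 + ∑ k ∈ Finset.range n, c k)) + β ^ (n + 1) * c n := by
          gcongr
          · exact le_pow_mul_add_sum_of_le_mul_add hβ hc h n hnm.le
          · exact le_mul_of_one_le_left (hc n hnm) (one_le_pow₀ hβ)
      _ = β ^ (n + 1) * (a 0 + ∑ k ∈ Finset.range (n + 1), c k) := by
          rw [Finset.sum_range_succ]; ring

theorem one_add_div_pow_le_exp {a x : ℝ} (ha : 0 ≤ a) {k : ℕ} (hk : (k : ℝ) ≤ x) :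
    (1 + a / x) ^ k ≤ Real.exp a := by
  have hx : 0 ≤ x := (Nat.cast_nonneg k).trans hk
  have hka : k * (a / x) ≤ a := by
    rcases hx.eq_or_lt with rfl | hx
    · simpa using ha
    · calc k * (a / x) ≤ x * (a / x) := by gcongr
        _ = a := mul_div_cancel₀ a hx.ne'
  calc (1 + a / x) ^ k ≤ Real.exp (a / x) ^ k := by
        gcongr
        linarith [Real.add_one_le_exp (a / x)]
    _ = Real.exp (k * (a / x)) := (Real.exp_nat_mul _ _).symm
    _ ≤ Real.exp a := Real.exp_le_exp.2 hka

theorem le_sqrt_sq_add_sq_left (a b : ℝ) : a ≤ √(a ^ 2 + b ^ 2) :=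
  (le_abs_self a).trans (Real.abs_le_sqrt (le_add_of_nonneg_right (sq_nonneg b)))

theorem le_sqrt_sq_add_sq_right (a b : ℝ) : b ≤ √(a ^ 2 + b ^ 2) :=
  add_comm (b ^ 2) (a ^ 2) ▸ le_sqrt_sq_add_sq_left b a

theorem add_le_two_mul_sqrt_sq_add_sq (a b : ℝ) : a + b ≤ 2 * √(a ^ 2 + b ^ 2) := by
  linarith [le_sqrt_sq_add_sq_left a b, le_sqrt_sq_add_sq_right a b]

theorem sum_sum_add_le_two_mul_sum_sum_sqrt {ι κ : Type*} (s : Finset ι) (t : Finset κ)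
    (a b : ι → κ → ℝ) :
    ∑ i ∈ s, ∑ j ∈ t, (a i j + b i j) ≤ 2 * ∑ i ∈ s, ∑ j ∈ t, √(a i j ^ 2 + b i j ^ 2) := by
  simp only [Finset.mul_sum]
  gcongr with i _ j
  exact add_le_two_mul_sqrt_sq_add_sq _ _

theorem inv_two_mul_mul_mul_eq_div {L M : ℕ} (hM : 0 < M) (a : ℝ) :
    (2 * (L : ℝ) * M)⁻¹ * M * a = a / (2 * L) := by
  have : (M : ℝ) ≠ 0 := by positivity
  field_simp

section Transformer

variable {D N q : ℕ} {f h : Mat D N → Par q → Mat D N} {L M : ℕ}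
  {θ w θ' w' : ℕ → Fin M → Par q} {H : Mat D N} {r κ R α Λ : ℝ}

theorem Tdis_zero : Tdis f h L M θ w H 0 = H := rfl

theorem TdisHalf_eq_eulerStep (l : ℕ) :
    TdisHalf f h L M θ w H l = eulerStep f (2 * L * M)⁻¹ (θ l) (Tdis f h L M θ w H l) := rfl

theorem Tdis_succ_eq_eulerStep (l : ℕ) :
    Tdis f h L M θ w H (l + 1) = eulerStep h (2 * L * M)⁻¹ (w l) (TdisHalf f h L M θ w H l) :=
  rfl

theorem norm_TdisHalf_le (hM : 0 < M) (hf : LinearGrowthOn f r κ) {l : ℕ}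
    (hθ : ∀ j, ‖θ l j‖ ≤ r) :
    ‖TdisHalf f h L M θ w H l‖ ≤ (1 + κ / (2 * L)) * ‖Tdis f h L M θ w H l‖ := by
  rw [TdisHalf_eq_eulerStep, ← inv_two_mul_mul_mul_eq_div hM κ]
  exact hf.norm_eulerStep_le (by positivity) hθ

theorem norm_Tdis_succ_le (hM : 0 < M) (hh : LinearGrowthOn h r κ) {l : ℕ}
    (hw : ∀ j, ‖w l j‖ ≤ r) :
    ‖Tdis f h L M θ w H (l + 1)‖ ≤ (1 + κ / (2 * L)) * ‖TdisHalf f h L M θ w H l‖ := by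
  rw [Tdis_succ_eq_eulerStep, ← inv_two_mul_mul_mul_eq_div hM κ]
  exact hh.norm_eulerStep_le (by positivity) hw

theorem norm_Tdis_le_pow (hM : 0 < M) (hκ : 0 ≤ κ) (hf : LinearGrowthOn f r κ)
    (hh : LinearGrowthOn h r κ) (hθ : ∀ l < L, ∀ j, ‖θ l j‖ ≤ r)
    (hw : ∀ l < L, ∀ j, ‖w l j‖ ≤ r) {n : ℕ} (hn : n ≤ L) :
    ‖Tdis f h L M θ w H n‖ ≤ (1 + κ / (2 * L)) ^ (2 * n) * ‖H‖ := by
  have hb : 1 ≤ 1 + κ / (2 * L) := le_add_of_nonneg_right (by positivity)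
  have hstep : ∀ l < L, ‖Tdis f h L M θ w H (l + 1)‖ ≤
      (1 + κ / (2 * L)) ^ 2 * ‖Tdis f h L M θ w H l‖ + 0 := fun l hl =>
    calc ‖Tdis f h L M θ w H (l + 1)‖
        ≤ (1 + κ / (2 * L)) * ‖TdisHalf f h L M θ w H l‖ := norm_Tdis_succ_le hM hh (hw l hl)
      _ ≤ (1 + κ / (2 * L)) * ((1 + κ / (2 * L)) * ‖Tdis f h L M θ w H l‖) := by
          gcongr; exact norm_TdisHalf_le hM hf (hθ l hl)
      _ = (1 + κ / (2 * L)) ^ 2 * ‖Tdis f h L M θ w H l‖ + 0 := by ring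
  simpa [pow_mul, Tdis_zero] using
    le_pow_mul_add_sum_of_le_mul_add (a := fun l => ‖Tdis f h L M θ w H l‖) (c := fun _ => 0)
      (one_le_pow₀ hb) (fun _ _ => le_rfl) hstep n hn

theorem norm_Tdis_le_exp (hM : 0 < M) (hκ : 0 ≤ κ) (hf : LinearGrowthOn f r κ)
    (hh : LinearGrowthOn h r κ) (hθ : ∀ l < L, ∀ j, ‖θ l j‖ ≤ r)
    (hw : ∀ l < L, ∀ j, ‖w l j‖ ≤ r) {n : ℕ} (hn : n ≤ L) :
    ‖Tdis f h L M θ w H n‖ ≤ Real.exp κ * ‖H‖ := by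
  refine (norm_Tdis_le_pow hM hκ hf hh hθ hw hn).trans ?_
  gcongr
  exact one_add_div_pow_le_exp hκ (by push_cast; linarith [(Nat.cast_le (α := ℝ)).2 hn])

theorem norm_TdisHalf_le_exp (hM : 0 < M) (hκ : 0 ≤ κ) (hf : LinearGrowthOn f r κ)
    (hh : LinearGrowthOn h r κ) (hθ : ∀ l < L, ∀ j, ‖θ l j‖ ≤ r)
    (hw : ∀ l < L, ∀ j, ‖w l j‖ ≤ r) {n : ℕ} (hn : n < L) :
    ‖TdisHalf f h L M θ w H n‖ ≤ Real.exp κ * ‖H‖ := by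
  have hb : 0 ≤ 1 + κ / (2 * L) := by positivity
  calc ‖TdisHalf f h L M θ w H n‖ ≤ (1 + κ / (2 * L)) * ‖Tdis f h L M θ w H n‖ :=
        norm_TdisHalf_le hM hf (hθ n hn)
    _ ≤ (1 + κ / (2 * L)) * ((1 + κ / (2 * L)) ^ (2 * n) * ‖H‖) := by
        gcongr; exact norm_Tdis_le_pow hM hκ hf hh hθ hw hn.le
    _ = (1 + κ / (2 * L)) ^ (2 * n + 1) * ‖H‖ := by ring
    _ ≤ Real.exp κ * ‖H‖ := by
        gcongr
        refine one_add_div_pow_le_exp hκ ?_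
        have : (n : ℝ) + 1 ≤ L := by exact_mod_cast hn
        push_cast; linarith

theorem norm_Tdis_succ_sub_le (hM : 0 < M) (hα : 0 ≤ α) (hΛ : 0 ≤ Λ)
    (hfL : LipschitzOnBalls f R r α Λ) (hhL : LipschitzOnBalls h R r α Λ) {l : ℕ}
    (hT : ‖Tdis f h L M θ w H l‖ ≤ R) (hT' : ‖Tdis f h L M θ' w' H l‖ ≤ R)
    (hS : ‖TdisHalf f h L M θ w H l‖ ≤ R) (hS' : ‖TdisHalf f h L M θ' w' H l‖ ≤ R)
    (hθ : ∀ j, ‖θ l j‖ ≤ r) (hw : ∀ j, ‖w l j‖ ≤ r)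
    (hθ' : ∀ j, ‖θ' l j‖ ≤ r) (hw' : ∀ j, ‖w' l j‖ ≤ r) :
    ‖Tdis f h L M θ w H (l + 1) - Tdis f h L M θ' w' H (l + 1)‖ ≤
      (1 + α / (2 * L)) ^ 2 * ‖Tdis f h L M θ w H l - Tdis f h L M θ' w' H l‖ +
        (1 + α / (2 * L)) * ((2 * (L : ℝ) * M)⁻¹ * Λ *
          ∑ j, (‖θ l j - θ' l j‖ + ‖w l j - w' l j‖)) := by
  have hδ : 0 ≤ (2 * (L : ℝ) * M)⁻¹ := by positivity
  have hb : 1 ≤ 1 + α / (2 * L) := le_add_of_nonneg_right (by positivity)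
  have hhalf := hfL.norm_eulerStep_sub_le hδ hT hT' hθ hθ'
  have hfull := hhL.norm_eulerStep_sub_le hδ hS hS' hw hw'
  rw [inv_two_mul_mul_mul_eq_div hM] at hhalf hfull
  rw [Finset.sum_add_distrib]
  calc ‖Tdis f h L M θ w H (l + 1) - Tdis f h L M θ' w' H (l + 1)‖
      ≤ (1 + α / (2 * L)) * ‖TdisHalf f h L M θ w H l - TdisHalf f h L M θ' w' H l‖ +
          (2 * (L : ℝ) * M)⁻¹ * Λ * ∑ j, ‖w l j - w' l j‖ := hfull
    _ ≤ (1 + α / (2 * L)) * ((1 + α / (2 * L)) *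
          ‖Tdis f h L M θ w H l - Tdis f h L M θ' w' H l‖ +
          (2 * (L : ℝ) * M)⁻¹ * Λ * ∑ j, ‖θ l j - θ' l j‖) +
          (1 + α / (2 * L)) * ((2 * (L : ℝ) * M)⁻¹ * Λ * ∑ j, ‖w l j - w' l j‖) := by
        have hsum : 0 ≤ (2 * (L : ℝ) * M)⁻¹ * Λ * ∑ j, ‖w l j - w' l j‖ := by positivity
        exact add_le_add (mul_le_mul_of_nonneg_left hhalf (by positivity))
          (le_mul_of_one_le_left hsum hb)
    _ = _ := by ring

theorem norm_Tdis_sub_le (hL : 0 < L) (hM : 0 < M) (hκ : 0 ≤ κ) (hα : 0 ≤ α) (hΛ : 0 ≤ Λ)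
    (hfg : LinearGrowthOn f r κ) (hhg : LinearGrowthOn h r κ)
    (hfL : LipschitzOnBalls f R r α Λ) (hhL : LipschitzOnBalls h R r α Λ)
    (hR : Real.exp κ * ‖H‖ ≤ R)
    (hθ : ∀ l < L, ∀ j, ‖θ l j‖ ≤ r) (hw : ∀ l < L, ∀ j, ‖w l j‖ ≤ r)
    (hθ' : ∀ l < L, ∀ j, ‖θ' l j‖ ≤ r) (hw' : ∀ l < L, ∀ j, ‖w' l j‖ ≤ r) {n : ℕ} (hn : n ≤ L) :
    ‖Tdis f h L M θ w H n - Tdis f h L M θ' w' H n‖ ≤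
      Real.exp (2 * α) * Λ / (M * L) *
        ∑ l ∈ Finset.range L, ∑ j, √(‖θ l j - θ' l j‖ ^ 2 + ‖w l j - w' l j‖ ^ 2) := by
  set b := 1 + α / (2 * L)
  set c : ℕ → ℝ := fun l =>
    b * ((2 * (L : ℝ) * M)⁻¹ * Λ * ∑ j, (‖θ l j - θ' l j‖ + ‖w l j - w' l j‖))
  have hb : 1 ≤ b := le_add_of_nonneg_right (by positivity)
  have hb_exp : b ≤ Real.exp α := by
    simpa using one_add_div_pow_le_exp (k := 1) hα (x := 2 * L) (by
      have : (1 : ℝ) ≤ L := by exact_mod_cast hL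
      push_cast; linarith)
  have hc : ∀ l, 0 ≤ c l := fun l => by positivity
  have hstep : ∀ l < L, ‖Tdis f h L M θ w H (l + 1) - Tdis f h L M θ' w' H (l + 1)‖ ≤
      b ^ 2 * ‖Tdis f h L M θ w H l - Tdis f h L M θ' w' H l‖ + c l := fun l hl =>
    norm_Tdis_succ_sub_le hM hα hΛ hfL hhL
      ((norm_Tdis_le_exp hM hκ hfg hhg hθ hw hl.le).trans hR)
      ((norm_Tdis_le_exp hM hκ hfg hhg hθ' hw' hl.le).trans hR)
      ((norm_TdisHalf_le_exp hM hκ hfg hhg hθ hw hl).trans hR)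
      ((norm_TdisHalf_le_exp hM hκ hfg hhg hθ' hw' hl).trans hR)
      (hθ l hl) (hw l hl) (hθ' l hl) (hw' l hl)
  have hgronwall := le_pow_mul_add_sum_of_le_mul_add
    (a := fun l => ‖Tdis f h L M θ w H l - Tdis f h L M θ' w' H l‖) (one_le_pow₀ hb)
    (fun l _ => hc l) hstep n hn
  simp only [Tdis_zero, sub_self, norm_zero, zero_add, ← pow_mul] at hgronwall
  calc ‖Tdis f h L M θ w H n - Tdis f h L M θ' w' H n‖
      ≤ b ^ (2 * n) * ∑ l ∈ Finset.range n, c l := hgronwall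
    _ ≤ Real.exp α * ∑ l ∈ Finset.range L, c l := by
        gcongr
        exact one_add_div_pow_le_exp hα (by push_cast; exact_mod_cast Nat.mul_le_mul_left 2 hn)
    _ ≤ Real.exp α * (Real.exp α * ((2 * (L : ℝ) * M)⁻¹ * Λ *
          ∑ l ∈ Finset.range L, ∑ j, (‖θ l j - θ' l j‖ + ‖w l j - w' l j‖))) := by
        rw [← Finset.mul_sum, ← Finset.mul_sum]
        gcongr
    _ ≤ Real.exp α * (Real.exp α * ((2 * (L : ℝ) * M)⁻¹ * Λ * (2 * ∑ l ∈ Finset.range L, ∑ j,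
          √(‖θ l j - θ' l j‖ ^ 2 + ‖w l j - w' l j‖ ^ 2)))) := by
        gcongr
        exact sum_sum_add_le_two_mul_sum_sum_sqrt _ _ _ _
    _ = _ := by rw [show 2 * α = α + α by ring, Real.exp_add]; ring

end Transformer

theorem stmt7_general (D N q : ℕ) (f h : Mat D N → Par q → Mat D N)
    (B K r : ℝ) (φP φT : ℝ → ℝ)
    (hK : 0 < K)
    (hφP : Continuous φP ∧ Monotone φP) (hφT : Continuous φT ∧ Monotone φT)
    (hfdiff : Differentiable ℝ fun z : Mat D N × Par q => f z.1 z.2)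
    (hhdiff : Differentiable ℝ fun z : Mat D N × Par q => h z.1 z.2)
    (hG1f : ∀ (T : Mat D N) (θ : Par q),
      colNorm (f T θ) ≤ K * colNorm T * (1 + ‖θ‖ + ‖θ‖ ^ 2))
    (hG2f : ∀ (T : Mat D N) (θ : Par q) (i : Fin (N + 1)),
      ‖fderiv ℝ (fun θ' => matCol (f T θ') i) θ‖ ≤ φP (colNorm T) * (1 + ‖θ‖))
    (hG3f : ∀ (T : Mat D N) (θ : Par q),
      ‖fderiv ℝ (fun T' => f T' θ) T‖ ≤ φT ‖T‖ * (1 + ‖θ‖ + ‖θ‖ ^ 2))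
    (hG1h : ∀ (T : Mat D N) (w : Par q),
      colNorm (h T w) ≤ K * colNorm T * (1 + ‖w‖ + ‖w‖ ^ 2))
    (hG2h : ∀ (T : Mat D N) (w : Par q) (i : Fin (N + 1)),
      ‖fderiv ℝ (fun w' => matCol (h T w') i) w‖ ≤ φP (colNorm T) * (1 + ‖w‖))
    (hG3h : ∀ (T : Mat D N) (w : Par q),
      ‖fderiv ℝ (fun T' => h T' w) T‖ ≤ φT ‖T‖ * (1 + ‖w‖ + ‖w‖ ^ 2)) :
    ∃ C : ℝ, 0 < C ∧ ∀ (L M : ℕ), 0 < L → 0 < M →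
      ∀ θ w θ' w' : ℕ → Fin M → Par q,
        (∀ l < L, ∀ j : Fin M, Real.sqrt (‖θ l j‖ ^ 2 + ‖w l j‖ ^ 2) ≤ r) →
        (∀ l < L, ∀ j : Fin M, Real.sqrt (‖θ' l j‖ ^ 2 + ‖w' l j‖ ^ 2) ≤ r) →
        ∀ H : Mat D N, colNorm H ≤ B →
          ∀ l ≤ L,
            ‖Tdis f h L M θ w H l - Tdis f h L M θ' w' H l‖ ≤
              C / ((M : ℝ) * L) * ∑ l' ∈ Finset.range L, ∑ j : Fin M,
                Real.sqrt (‖θ l' j - θ' l' j‖ ^ 2 + ‖w l' j - w' l' j‖ ^ 2) := by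
  have hf : IsRegularEncoder f K φP φT := ⟨hfdiff, hG1f, hG2f, hG3f⟩
  have hh : IsRegularEncoder h K φP φT := ⟨hhdiff, hG1h, hG2h, hG3h⟩
  set κ := √(N + 1) * K * (1 + r + r ^ 2)
  set R := Real.exp κ * (√(N + 1) * B)
  set α := φT R * (1 + r + r ^ 2)
  set Λ := √(N + 1) * φP R * (1 + r)
  refine ⟨max (Real.exp (2 * α) * Λ) 1, lt_max_of_lt_right one_pos, ?_⟩
  intro L M hL hM θ w θ' w' hΘ hΘ' H hH l hl
  have hr : 0 ≤ r := (Real.sqrt_nonneg _).trans (hΘ 0 hL ⟨0, hM⟩)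
  have hκ : 0 ≤ κ := by positivity
  have hR : Real.exp κ * ‖H‖ ≤ R := mul_le_mul_of_nonneg_left
    ((norm_le_sqrt_mul_colNorm H).trans (mul_le_mul_of_nonneg_left hH (Real.sqrt_nonneg _)))
    (Real.exp_pos κ).le
  have hHR : ‖H‖ ≤ R := (le_mul_of_one_le_left (norm_nonneg H) (Real.one_le_exp hκ)).trans hR
  have hα : 0 ≤ α := mul_nonneg ((hf.phiT_nonneg H).trans (hφT.2 hHR)) (by positivity)
  have hΛ : 0 ≤ Λ := by
    have := (hf.phiP_nonneg H).trans (hφP.2 ((colNorm_le_norm H).trans hHR))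
    positivity
  calc ‖Tdis f h L M θ w H l - Tdis f h L M θ' w' H l‖
      ≤ Real.exp (2 * α) * Λ / (M * L) * ∑ l ∈ Finset.range L, ∑ j,
          √(‖θ l j - θ' l j‖ ^ 2 + ‖w l j - w' l j‖ ^ 2) :=
        norm_Tdis_sub_le hL hM hκ hα hΛ (hf.linearGrowthOn hK.le) (hh.linearGrowthOn hK.le)
          (hf.lipschitzOnBalls hφP.2 hφT.2) (hh.lipschitzOnBalls hφP.2 hφT.2) hR
          (fun l hl j => (le_sqrt_sq_add_sq_left _ _).trans (hΘ l hl j))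
          (fun l hl j => (le_sqrt_sq_add_sq_right _ _).trans (hΘ l hl j))
          (fun l hl j => (le_sqrt_sq_add_sq_left _ _).trans (hΘ' l hl j))
          (fun l hl j => (le_sqrt_sq_add_sq_right _ _).trans (hΘ' l hl j)) hl
    _ ≤ _ := by
        gcongr
        exact le_max_left _ _

/-- discrete Transformer difference bound in terms of the total parameter
distance. -/
theorem stmt7 (D N q : ℕ) (f h : Mat D N → Par q → Mat D N)
    (B K r : ℝ) (φP φT : ℝ → ℝ)
    (hB : 0 < B) (hK : 0 < K) (hr : 0 < r)
    (hφP : Continuous φP ∧ Monotone φP) (hφT : Continuous φT ∧ Monotone φT)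
    (hfdiff : Differentiable ℝ fun z : Mat D N × Par q => f z.1 z.2)
    (hhdiff : Differentiable ℝ fun z : Mat D N × Par q => h z.1 z.2)
    (hG1f : ∀ (T : Mat D N) (θ : Par q),
      colNorm (f T θ) ≤ K * colNorm T * (1 + ‖θ‖ + ‖θ‖ ^ 2))
    (hG2f : ∀ (T : Mat D N) (θ : Par q) (i : Fin (N + 1)),
      ‖fderiv ℝ (fun θ' => matCol (f T θ') i) θ‖ ≤ φP (colNorm T) * (1 + ‖θ‖))
    (hG3f : ∀ (T : Mat D N) (θ : Par q),
      ‖fderiv ℝ (fun T' => f T' θ) T‖ ≤ φT ‖T‖ * (1 + ‖θ‖ + ‖θ‖ ^ 2))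
    (hG1h : ∀ (T : Mat D N) (w : Par q),
      colNorm (h T w) ≤ K * colNorm T * (1 + ‖w‖ + ‖w‖ ^ 2))
    (hG2h : ∀ (T : Mat D N) (w : Par q) (i : Fin (N + 1)),
      ‖fderiv ℝ (fun w' => matCol (h T w') i) w‖ ≤ φP (colNorm T) * (1 + ‖w‖))
    (hG3h : ∀ (T : Mat D N) (w : Par q),
      ‖fderiv ℝ (fun T' => h T' w) T‖ ≤ φT ‖T‖ * (1 + ‖w‖ + ‖w‖ ^ 2)) :
    ∃ C : ℝ, 0 < C ∧ ∀ (L M : ℕ), 0 < L → 0 < M →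
      ∀ θ w θ' w' : ℕ → Fin M → Par q,
        (∀ l < L, ∀ j : Fin M, Real.sqrt (‖θ l j‖ ^ 2 + ‖w l j‖ ^ 2) ≤ r) →
        (∀ l < L, ∀ j : Fin M, Real.sqrt (‖θ' l j‖ ^ 2 + ‖w' l j‖ ^ 2) ≤ r) →
        ∀ H : Mat D N, colNorm H ≤ B →
          ∀ l ≤ L,
            ‖Tdis f h L M θ w H l - Tdis f h L M θ' w' H l‖ ≤
              C / ((M : ℝ) * L) * ∑ l' ∈ Finset.range L, ∑ j : Fin M,
                Real.sqrt (‖θ l' j - θ' l' j‖ ^ 2 + ‖w l' j - w' l' j‖ ^ 2) :=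
  stmt7_general D N q f h B K r φP φT hK hφP hφT hfdiff hhdiff hG1f hG2f hG3f hG1h hG2h hG3h
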